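/- arXiv:2201.12957 — 2 statements merged into one kernel-verified Lean document; each statement's English description precedes it below -/
import Mathlib

section
/- Let N ≥ 3 be an integer and define F : ℝ → ℝ by F(x) = |x|^{4/(N−2)} x. Then there exists a constant C = C(N) such that for all real numbers x, y, z with x ≠ 0: if N ≥ 6 then | F(x+y+z) − F(x+y) − F(x+z) + F(x) | ≤ C |x|^{(6−N)/(2(N−2))} |y|^{(N+2)/(2(N−2))} |z|, while if 3 ≤ N ≤ 5 then | F(x+y+z) − F(x+y) − F(x+z) + F(x) | ≤ C |y| |z| (|x| + |y| + |z|)^{(6−N)/(N−2)}. -/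
/-!
With `p = 4/(N-2)`, `F(t) = |t|^p t` is `C¹` with `F'(t) = (p+1)|t|^p`, and by the mean value
theorem the second difference is at most `|y| · sup |F'(x+z+s) - F'(x+s)|` over `|s| ≤ |y|`
(or the same with `y` and `z` swapped).
For `N ≤ 5` (`p ≥ 1`), `t ↦ t^p` is Lipschitz on `[0, |x|+|y|+|z|]`.
For `N ≥ 6` (`p ≤ 1`) we split: if `|y| ≤ |x|/2` then `|x+s| ≥ |x|/2`, where `t ↦ t^p` is
Lipschitz with constant `(|x|/2)^(p-1)`; otherwise swap `y` and `z` and use that `t ↦ t^p` is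
`p`-Hölder, trading `|y|^p` for `|x|^((p-1)/2) |y|^((p+1)/2)` since `|y| > |x|/2`.
-/

open Real Filter Set Asymptotics Topology

def secondDifference (F : ℝ → ℝ) (x y z : ℝ) : ℝ :=
  F (x + y + z) - F (x + y) - F (x + z) + F x

lemma secondDifference_comm (F : ℝ → ℝ) (x y z : ℝ) :
    secondDifference F x y z = secondDifference F x z y := by
  simp only [secondDifference, add_right_comm x y z]
  ring

lemma abs_secondDifference_le {F F' : ℝ → ℝ} (hF : ∀ t, HasDerivAt F (F' t) t) {x y z B : ℝ}
    (hB : ∀ s, |s| ≤ |y| → |F' (x + z + s) - F' (x + s)| ≤ B) :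
    |secondDifference F x y z| ≤ B * |y| := by
  have hderiv : ∀ s, HasDerivAt (fun s => F (x + z + s) - F (x + s))
      (F' (x + z + s) - F' (x + s)) s :=
    fun s => ((hF _).comp_const_add (x + z) s).sub ((hF _).comp_const_add x s)
  have hmvt := Convex.norm_image_sub_le_of_norm_hasDerivWithin_le
    (fun s _ => (hderiv s).hasDerivWithinAt) (fun s hs => hB s (mem_closedBall_zero_iff.1 hs))
    (convex_closedBall 0 |y|) (Metric.mem_closedBall_self (abs_nonneg y))
    (mem_closedBall_zero_iff.2 le_rfl)
  simp only [Real.norm_eq_abs, sub_zero, add_zero] at hmvt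
  rw [secondDifference, add_right_comm x y z]
  convert hmvt using 2
  ring

lemma hasDerivAt_abs_rpow_mul_self {p : ℝ} (hp : 0 < p) (t : ℝ) :
    HasDerivAt (fun x => |x| ^ p * x) ((p + 1) * |t| ^ p) t := by
  rcases eq_or_ne t 0 with rfl | ht
  · rw [hasDerivAt_iff_isLittleO_nhds_zero]
    have hlim : Tendsto (fun h : ℝ => |h| ^ p) (𝓝 0) (𝓝 0) := by
      simpa [zero_rpow hp.ne'] using
        ((continuous_abs.rpow_const fun _ => Or.inr hp.le).tendsto 0)
    simpa [zero_rpow hp.ne'] using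
      ((isLittleO_one_iff ℝ).2 hlim).mul_isBigO (isBigO_refl (fun h : ℝ => h) (𝓝 0))
  · refine (((hasDerivAt_abs ht).rpow_const (Or.inl (abs_ne_zero.2 ht))).mul
      (hasDerivAt_id t)).congr_deriv ?_
    have e : |t| ^ (p - 1) * |t| = |t| ^ p := by
      rw [rpow_sub_one (abs_ne_zero.2 ht), div_mul_cancel₀ _ (abs_ne_zero.2 ht)]
    have hs : (SignType.sign t : ℝ) * t = |t| := sign_mul_self t
    simp only [id]
    linear_combination p * e + p * |t| ^ (p - 1) * hs

lemma abs_abs_rpow_sub_abs_rpow_le {p : ℝ} (hp0 : 0 ≤ p) (hp1 : p ≤ 1) (a b : ℝ) :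
    |(|a| ^ p - |b| ^ p)| ≤ |a - b| ^ p := by
  have hle : ∀ u v : ℝ, |u| ^ p - |v| ^ p ≤ |u - v| ^ p := fun u v => by
    have : |u| ^ p ≤ |u - v| ^ p + |v| ^ p :=
      calc |u| ^ p ≤ (|u - v| + |v|) ^ p :=
            rpow_le_rpow (abs_nonneg u) (sub_le_iff_le_add.1 (abs_sub_abs_le_abs_sub u v)) hp0
        _ ≤ |u - v| ^ p + |v| ^ p := rpow_add_le_add_rpow (abs_nonneg _) (abs_nonneg _) hp0 hp1
    linarith
  exact abs_sub_le_iff.2 ⟨hle a b, abs_sub_comm a b ▸ hle b a⟩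

lemma rpow_mul_le_rpow_add_one {s u v : ℝ} (hs : s ≤ 0) (hv : 0 ≤ v) (hvu : v ≤ u) :
    u ^ s * v ≤ v ^ (s + 1) := by
  rcases hv.eq_or_lt with rfl | hv
  · simpa using rpow_nonneg le_rfl (s + 1)
  · rw [rpow_add_one hv.ne']
    exact mul_le_mul_of_nonneg_right (rpow_le_rpow_of_nonpos hv hvu hs) hv.le

-- Concavity of `t ↦ t ^ p`: the chord from `b` to `a` is no steeper than the chord from `0` to `a`.
lemma rpow_sub_rpow_le_rpow_sub_one_mul {p a b : ℝ} (hp : p ≤ 1) (ha : 0 < a) (hb : 0 ≤ b)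
    (hba : b ≤ a) : a ^ p - b ^ p ≤ a ^ (p - 1) * (a - b) := by
  have hchord : a ^ (p - 1) * b ≤ b ^ p := by
    simpa using rpow_mul_le_rpow_add_one (by linarith : p - 1 ≤ 0) hb hba
  have e : a ^ (p - 1) * a = a ^ p := by rw [rpow_sub_one ha.ne', div_mul_cancel₀ _ ha.ne']
  linear_combination hchord - e

lemma abs_rpow_sub_rpow_le_of_le_one {p m a b : ℝ} (hp0 : 0 ≤ p) (hp1 : p ≤ 1) (hm : 0 < m)
    (ha : 0 ≤ a) (hb : 0 ≤ b) (hmab : m ≤ max a b) :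
    |a ^ p - b ^ p| ≤ m ^ (p - 1) * |a - b| := by
  wlog hba : b ≤ a generalizing a b
  · rw [abs_sub_comm, abs_sub_comm a]
    exact this hb ha (max_comm a b ▸ hmab) (le_of_not_ge hba)
  rw [max_eq_left hba] at hmab
  rw [abs_of_nonneg (sub_nonneg.2 (rpow_le_rpow hb hba hp0)), abs_of_nonneg (sub_nonneg.2 hba)]
  calc a ^ p - b ^ p ≤ a ^ (p - 1) * (a - b) :=
        rpow_sub_rpow_le_rpow_sub_one_mul hp1 (hm.trans_le hmab) hb hba
    _ ≤ m ^ (p - 1) * (a - b) :=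
        mul_le_mul_of_nonneg_right (rpow_le_rpow_of_nonpos hm hmab (by linarith))
          (sub_nonneg.2 hba)

lemma abs_rpow_sub_rpow_le_of_one_le {p M a b : ℝ} (hp : 1 ≤ p) (ha : a ∈ Icc 0 M)
    (hb : b ∈ Icc 0 M) : |a ^ p - b ^ p| ≤ p * M ^ (p - 1) * |a - b| :=
  Convex.norm_image_sub_le_of_norm_hasDerivWithin_le
    (fun _ _ => (hasDerivAt_rpow_const (Or.inr hp)).hasDerivWithinAt)
    (fun t ht => by
      rw [Real.norm_eq_abs, abs_of_nonneg (by have := ht.1; positivity)]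
      gcongr
      · exact ht.1
      · exact ht.2)
    (convex_Icc 0 M) hb ha

lemma div_two_rpow_le {u t : ℝ} (hu : 0 ≤ u) (ht : -1 ≤ t) : (u / 2) ^ t ≤ 2 * u ^ t := by
  have h2t : 2⁻¹ ≤ (2 : ℝ) ^ t := by
    simpa [rpow_neg_one] using rpow_le_rpow_of_exponent_le one_le_two ht
  rw [div_rpow hu zero_le_two, div_le_iff₀ (by positivity)]
  nlinarith [rpow_nonneg hu t]

lemma rpow_sub_one_mul_le {p u v : ℝ} (hp : p ≤ 1) (hu : 0 < u) (hv : 0 ≤ v) (hvu : v ≤ u) :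
    u ^ (p - 1) * v ≤ u ^ ((p - 1) / 2) * v ^ ((p + 1) / 2) := by
  have hsplit : u ^ (p - 1) = u ^ ((p - 1) / 2) * u ^ ((p - 1) / 2) := by
    rw [← rpow_add hu]
    congr 1
    ring
  rw [hsplit, mul_assoc, show (p + 1) / 2 = (p - 1) / 2 + 1 by ring]
  exact mul_le_mul_of_nonneg_left (rpow_mul_le_rpow_add_one (by linarith) hv hvu) (by positivity)

section

variable {p : ℝ}

lemma abs_secondDifference_le_of_le_half (hp0 : 0 < p) (hp1 : p ≤ 1) {x y : ℝ} (hx : x ≠ 0)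
    (hy : |y| ≤ |x| / 2) (z : ℝ) :
    |secondDifference (fun x => |x| ^ p * x) x y z|
      ≤ 2 * (p + 1) * |x| ^ ((p - 1) / 2) * |y| ^ ((p + 1) / 2) * |z| := by
  have hx' : 0 < |x| := abs_pos.2 hx
  have hD : |secondDifference (fun x => |x| ^ p * x) x y z|
      ≤ (p + 1) * ((|x| / 2) ^ (p - 1) * |z|) * |y| := by
    refine abs_secondDifference_le (hasDerivAt_abs_rpow_mul_self hp0) fun s hs => ?_
    have hxs : |x| / 2 ≤ |x + s| := by
      have := abs_sub (x + s) s
      rw [add_sub_cancel_right] at this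
      linarith
    rw [← mul_sub, abs_mul, abs_of_pos (by linarith : 0 < p + 1)]
    gcongr
    calc |(|x + z + s| ^ p - |x + s| ^ p)|
        ≤ (|x| / 2) ^ (p - 1) * |(|x + z + s| - |x + s|)| :=
          abs_rpow_sub_rpow_le_of_le_one hp0.le hp1 (by positivity) (abs_nonneg _) (abs_nonneg _)
            (le_max_of_le_right hxs)
      _ ≤ (|x| / 2) ^ (p - 1) * |z| := by
          refine mul_le_mul_of_nonneg_left ?_ (by positivity)
          simpa [add_right_comm] using abs_abs_sub_abs_le_abs_sub (x + z + s) (x + s)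
  calc |secondDifference (fun x => |x| ^ p * x) x y z|
      ≤ (p + 1) * ((2 * |x| ^ (p - 1)) * |z|) * |y| := by
        grw [hD, div_two_rpow_le hx'.le (by linarith : -1 ≤ p - 1)]
    _ = 2 * (p + 1) * (|x| ^ (p - 1) * |y|) * |z| := by ring
    _ ≤ 2 * (p + 1) * (|x| ^ ((p - 1) / 2) * |y| ^ ((p + 1) / 2)) * |z| := by
        grw [rpow_sub_one_mul_le hp1 hx' (abs_nonneg y) (by linarith)]
    _ = _ := by ring

lemma abs_secondDifference_le_of_half_lt (hp0 : 0 < p) (hp1 : p ≤ 1) {x y : ℝ} (hx : x ≠ 0)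
    (hy : |x| / 2 < |y|) (z : ℝ) :
    |secondDifference (fun x => |x| ^ p * x) x y z|
      ≤ 2 * (p + 1) * |x| ^ ((p - 1) / 2) * |y| ^ ((p + 1) / 2) * |z| := by
  have hx' : 0 < |x| := abs_pos.2 hx
  have hD : |secondDifference (fun x => |x| ^ p * x) x y z| ≤ (p + 1) * |y| ^ p * |z| := by
    rw [secondDifference_comm]
    refine abs_secondDifference_le (hasDerivAt_abs_rpow_mul_self hp0) fun s _ => ?_
    rw [← mul_sub, abs_mul, abs_of_pos (by linarith : 0 < p + 1)]
    gcongr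
    simpa [add_right_comm] using abs_abs_rpow_sub_abs_rpow_le hp0.le hp1 (x + y + s) (x + s)
  have hpow : |y| ^ p ≤ 2 * |x| ^ ((p - 1) / 2) * |y| ^ ((p + 1) / 2) :=
    calc |y| ^ p = |y| ^ ((p - 1) / 2) * |y| ^ ((p + 1) / 2) := by
          rw [← rpow_add (by linarith : (0 : ℝ) < |y|)]
          ring_nf
      _ ≤ (|x| / 2) ^ ((p - 1) / 2) * |y| ^ ((p + 1) / 2) := by
          refine mul_le_mul_of_nonneg_right ?_ (by positivity)
          exact rpow_le_rpow_of_nonpos (half_pos hx') hy.le (by linarith)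
      _ ≤ 2 * |x| ^ ((p - 1) / 2) * |y| ^ ((p + 1) / 2) := by
          grw [div_two_rpow_le hx'.le (by linarith : -1 ≤ (p - 1) / 2)]
  grw [hD, hpow]
  apply le_of_eq
  ring

lemma abs_secondDifference_le_of_le_one (hp0 : 0 < p) (hp1 : p ≤ 1) {x : ℝ} (hx : x ≠ 0)
    (y z : ℝ) :
    |secondDifference (fun x => |x| ^ p * x) x y z|
      ≤ 2 * (p + 1) * |x| ^ ((p - 1) / 2) * |y| ^ ((p + 1) / 2) * |z| := by
  rcases le_or_gt |y| (|x| / 2) with hy | hy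
  · exact abs_secondDifference_le_of_le_half hp0 hp1 hx hy z
  · exact abs_secondDifference_le_of_half_lt hp0 hp1 hx hy z

lemma abs_secondDifference_le_of_one_le (hp : 1 ≤ p) (x y z : ℝ) :
    |secondDifference (fun x => |x| ^ p * x) x y z|
      ≤ p * (p + 1) * |y| * |z| * (|x| + |y| + |z|) ^ (p - 1) := by
  rw [secondDifference_comm]
  refine (abs_secondDifference_le (hasDerivAt_abs_rpow_mul_self (by linarith))
    fun s hs => ?_).trans_eq (by ring : (p + 1) * (p * (|x| + |y| + |z|) ^ (p - 1) * |y|) * |z| = _)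
  rw [← mul_sub, abs_mul, abs_of_pos (by linarith : 0 < p + 1)]
  gcongr
  calc |(|x + y + s| ^ p - |x + s| ^ p)|
      ≤ p * (|x| + |y| + |z|) ^ (p - 1) * |(|x + y + s| - |x + s|)| := by
        refine abs_rpow_sub_rpow_le_of_one_le hp ⟨abs_nonneg _, ?_⟩ ⟨abs_nonneg _, ?_⟩
        · linarith [abs_add_three x y s, abs_nonneg y]
        · linarith [abs_add_le x s, abs_nonneg y]
    _ ≤ p * (|x| + |y| + |z|) ^ (p - 1) * |y| := by
        refine mul_le_mul_of_nonneg_left ?_ (by positivity)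
        simpa [add_right_comm] using abs_abs_sub_abs_le_abs_sub (x + y + s) (x + s)

end

/-- Second-difference estimate for the energy-critical nonlinearity
`F(x) = |x|^{4/(N-2)} x`, in high and low dimensions. -/
theorem critical_nonlinearity_second_difference
    (N : ℕ) (hN : 3 ≤ N)
    (F : ℝ → ℝ) (hF : ∀ x : ℝ, F x = |x| ^ ((4 : ℝ) / ((N : ℝ) - 2)) * x) :
    ∃ C : ℝ, 0 < C ∧ ∀ x y z : ℝ, x ≠ 0 →
      (6 ≤ N →
        |F (x + y + z) - F (x + y) - F (x + z) + F x|
          ≤ C * |x| ^ ((6 - (N : ℝ)) / (2 * ((N : ℝ) - 2))) *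
              |y| ^ (((N : ℝ) + 2) / (2 * ((N : ℝ) - 2))) * |z|) ∧
      (N ≤ 5 →
        |F (x + y + z) - F (x + y) - F (x + z) + F x|
          ≤ C * |y| * |z| * (|x| + |y| + |z|) ^ ((6 - (N : ℝ)) / ((N : ℝ) - 2))) := by
  have hN2 : (0 : ℝ) < N - 2 := by
    have : (3 : ℝ) ≤ N := by exact_mod_cast hN
    linarith
  set p : ℝ := 4 / ((N : ℝ) - 2) with hp_def
  have hp : 0 < p := by positivity
  obtain rfl : F = fun x => |x| ^ p * x := funext hF
  refine ⟨(p + 2) * (p + 1), by positivity, fun x y z hx => ⟨fun hN6 => ?_, fun hN5 => ?_⟩⟩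
  · have hN6 : (6 : ℝ) ≤ N := by exact_mod_cast hN6
    have hp1 : p ≤ 1 := by rw [hp_def, div_le_one hN2]; linarith
    have hr : (6 - (N : ℝ)) / (2 * ((N : ℝ) - 2)) = (p - 1) / 2 := by
      rw [hp_def]; field_simp; ring
    have hq : ((N : ℝ) + 2) / (2 * ((N : ℝ) - 2)) = (p + 1) / 2 := by
      rw [hp_def]; field_simp; ring
    rw [hr, hq]
    refine (abs_secondDifference_le_of_le_one hp hp1 hx y z).trans ?_
    gcongr
    linarith
  · have hN5 : (N : ℝ) ≤ 5 := by exact_mod_cast hN5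
    have hp1 : 1 ≤ p := by rw [hp_def, le_div_iff₀ hN2]; linarith
    have hr : (6 - (N : ℝ)) / ((N : ℝ) - 2) = p - 1 := by
      rw [hp_def]; field_simp; ring
    rw [hr]
    refine (abs_secondDifference_le_of_one_le hp1 x y z).trans ?_
    gcongr
    linarith
end

section
/- Let N ≥ 3 be an integer, a > 0, β = √(1 + 4a/(N−2)²), c = (N−2)(1−β)/2, α = −(N−2)(1+β)/2; assume ν := (N−2)β is an odd positive integer. Let R > 0, k₂ = ⌊(ν+4)/4⌋, and let d̃_j = ( ∏_{ℓ=1}^{k₂} (ν − 2ℓ − 2j + 4) ) / ( ∏_{1 ≤ ℓ ≤ k₂, ℓ ≠ j} (2ℓ − 2j) ) for 1 ≤ j ≤ k₂. Then for every locally absolutely continuous f : (R,∞) → ℝ with ∫_R^∞ |f'(r) + c f(r)/r|² r^{N−1}dr < ∞, the integrals ∫_R^∞ (f(r)r^c)' r^{2i−2} dr (1 ≤ i ≤ k₂) converge absolutely and: inf_{p ∈ ℝ^{k₂}} ∫_R^∞ | (f − Σ_{i=1}^{k₂} p_i r^{α+2i−2})'(r) + (c/r)(f − Σ_{i=1}^{k₂}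 p_i r^{α+2i−2})(r) |² r^{N−1}dr = ∫_R^∞ |f'(r) + c f(r)/r|² r^{N−1}dr − Σ_{i,j=1}^{k₂} d̃_i d̃_j ( R^{ν−2i−2j+4} / (ν−2i−2j+4) ) ( ∫_R^∞ (f(r)r^c)' r^{2i−2} dr ) ( ∫_R^∞ (f(r)r^c)' r^{2j−2} dr ); that is, this is the squared distance of f to span{ r^{α+2i−2} : 1 ≤ i ≤ k₂ } in the exterior homogeneous Sobolev space Ḣ¹_a(r ≥ R). -/
/-!
Write `u(r) = (f'(r) + c f(r)/r) r^{(N-1)/2}` and `x_i = ν/2 + 2 - 2i`, which is positive for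
`i ≤ k₂` since `ν` is odd. The weighted gradient of `r^{α+2i-2}` is `(2i-2-ν) r^{-x_i-1/2}`, so the
infimum is the squared `L²(R,∞)` distance from `u` to the span of the `r^{-x_i-1/2}`, computed by
least squares. Their Gram matrix `R^{-(x_i+x_j)}/(x_i+x_j)` is a Cauchy matrix rescaled by powers of
`R`; by Lagrange interpolation its inverse is `d̃_i d̃_j R^{x_i+x_j}/(x_i+x_j)`. Finally
`∫ u r^{-x_i-1/2} = ∫ (f r^c)' r^{2i-2}` because `(f r^c)' = (f' + c f/r) r^c`.
-/

open MeasureTheory Finset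

section CauchyMatrix

open Polynomial

variable {ι : Type*} [DecidableEq ι]

theorem prod_erase_sub_ne_zero {s : Finset ι} {x : ι → ℝ} (hx : Set.InjOn x s) {j : ι}
    (hj : j ∈ s) : ∏ ℓ ∈ s.erase j, (x j - x ℓ) ≠ 0 :=
  prod_ne_zero_iff.mpr fun _ hℓ =>
    sub_ne_zero.mpr fun h => (mem_erase.mp hℓ).1 (hx (mem_of_mem_erase hℓ) hj h.symm)

theorem sum_inv_add_mul_div_add_eq_ite {s : Finset ι} {x d : ι → ℝ} (hx : Set.InjOn x s)
    (hx₀ : ∀ i ∈ s, ∀ j ∈ s, x i + x j ≠ 0)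
    (hd : ∀ j ∈ s, d j = (∏ ℓ ∈ s, (x ℓ + x j)) / ∏ ℓ ∈ s.erase j, (x j - x ℓ))
    {i m : ι} (hi : i ∈ s) (hm : m ∈ s) :
    ∑ j ∈ s, (x i + x j)⁻¹ * (d j * d m / (x j + x m)) = if i = m then 1 else 0 := by
  set A : ℝ[X] := ∏ ℓ ∈ s.erase i, (X + C (x ℓ))
  have hA : ∀ y, A.eval y = ∏ ℓ ∈ s.erase i, (x ℓ + y) := fun y => by
    simp [A, eval_prod, add_comm]
  have hAdeg : A.degree < #s := by
    simp only [A, degree_prod, degree_X_add_C, sum_const, card_erase_of_mem hi, nsmul_one]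
    exact_mod_cast Nat.sub_lt (card_pos.mpr ⟨i, hi⟩) one_pos
  have hnodal : ∏ ℓ ∈ s, (-x m - x ℓ) ≠ 0 :=
    prod_ne_zero_iff.mpr fun ℓ hℓ h => hx₀ m hm ℓ hℓ (by linarith)
  -- the barycentric Lagrange formula for `A`, evaluated at `-x m`, which is not a node
  have hbary : ∑ j ∈ s, Lagrange.nodalWeight s x j * (-x m - x j)⁻¹ * A.eval (x j) =
      A.eval (-x m) / ∏ ℓ ∈ s, (-x m - x ℓ) := by
    rw [eq_div_iff hnodal, mul_comm, ← Lagrange.eval_nodal]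
    conv_rhs => rw [Lagrange.eq_interpolate hx hAdeg]
    rw [Lagrange.eval_interpolate_not_at_node _ fun j hj h => hx₀ m hm j hj (by linarith)]
  have hterm : ∀ j ∈ s, (x i + x j)⁻¹ * (d j * d m / (x j + x m)) =
      -d m * (Lagrange.nodalWeight s x j * (-x m - x j)⁻¹ * A.eval (x j)) := by
    intro j hj
    have hij := hx₀ i hi j hj
    have hjm := hx₀ j hj m hm
    have hmj : -x m - x j ≠ 0 := fun h => hx₀ m hm j hj (by linarith)
    have hPj := prod_erase_sub_ne_zero hx hj
    rw [hd j hj, hA, Lagrange.nodalWeight, ← mul_prod_erase s _ hi, prod_inv_distrib]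
    field_simp
    ring
  rw [sum_congr rfl hterm, ← mul_sum, hbary, hA]
  split_ifs with him
  · subst him
    have hcard : #s = #(s.erase i) + 1 := (card_erase_add_one hi).symm
    have hP := prod_erase_sub_ne_zero hx hi
    have hQ : ∏ ℓ ∈ s, (x ℓ + x i) ≠ 0 := prod_ne_zero_iff.mpr fun ℓ hℓ => hx₀ ℓ hℓ i hi
    rw [hd i hi, show ∏ ℓ ∈ s.erase i, (x ℓ + -x i) = ∏ ℓ ∈ s.erase i, -(x i - x ℓ) from
        prod_congr rfl fun _ _ => by ring,
      show ∏ ℓ ∈ s, (-x i - x ℓ) = ∏ ℓ ∈ s, -(x ℓ + x i) from prod_congr rfl fun _ _ => by ring,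
      prod_neg, prod_neg, hcard, pow_succ]
    field_simp
  · rw [prod_eq_zero (mem_erase.mpr ⟨Ne.symm him, hm⟩) (add_neg_cancel (x m)), zero_div, mul_zero]

theorem sum_rpow_div_mul_rpow_div_eq_ite {s : Finset ι} {x d : ι → ℝ} (hx : Set.InjOn x s)
    (hx₀ : ∀ i ∈ s, ∀ j ∈ s, x i + x j ≠ 0)
    (hd : ∀ j ∈ s, d j = (∏ ℓ ∈ s, (x ℓ + x j)) / ∏ ℓ ∈ s.erase j, (x j - x ℓ))
    {R : ℝ} (hR : 0 < R) {i m : ι} (hi : i ∈ s) (hm : m ∈ s) :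
    ∑ j ∈ s, R ^ (-(x i + x j)) / (x i + x j) * (d j * d m * (R ^ (x j + x m) / (x j + x m))) =
      if i = m then 1 else 0 := by
  have hterm : ∀ j ∈ s, R ^ (-(x i + x j)) / (x i + x j) *
      (d j * d m * (R ^ (x j + x m) / (x j + x m))) =
      R ^ (x m - x i) * ((x i + x j)⁻¹ * (d j * d m / (x j + x m))) := fun j _ => by
    have hpow : R ^ (-(x i + x j)) * R ^ (x j + x m) = R ^ (x m - x i) := by
      rw [← Real.rpow_add hR]
      ring_nf
    rw [← hpow]
    ring
  rw [sum_congr rfl hterm, ← mul_sum, sum_inv_add_mul_div_add_eq_ite hx hx₀ hd hi hm]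
  split_ifs with h
  · rw [h, sub_self, Real.rpow_zero, one_mul]
  · rw [mul_zero]

end CauchyMatrix

section LeastSquares

variable {ι : Type*}

theorem iInf_quadratic_eq [DecidableEq ι] (s : Finset ι) (Q : ℝ) (b : ι → ℝ)
    {G H : ι → ι → ℝ} (hG : ∀ i ∈ s, ∀ j ∈ s, G i j = G j i)
    (hG₀ : ∀ q : ι → ℝ, 0 ≤ ∑ i ∈ s, ∑ j ∈ s, q i * q j * G i j)
    (hGH : ∀ i ∈ s, ∀ m ∈ s, ∑ j ∈ s, G i j * H j m = if i = m then 1 else 0) :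
    ⨅ p : ι → ℝ, (Q - 2 * ∑ i ∈ s, p i * b i + ∑ i ∈ s, ∑ j ∈ s, p i * p j * G i j) =
      Q - ∑ i ∈ s, ∑ j ∈ s, H i j * b i * b j := by
  set p₀ : ι → ℝ := fun i => ∑ j ∈ s, H i j * b j
  have hGp₀ : ∀ i ∈ s, ∑ j ∈ s, G i j * p₀ j = b i := fun i hi => by
    simp only [p₀, mul_sum, ← mul_assoc]
    rw [sum_comm]
    simp only [← sum_mul]
    rw [sum_congr rfl fun m hm => congrArg (· * b m) (hGH i hi m hm)]
    simp [hi]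
  have hleft : ∀ q : ι → ℝ, ∑ i ∈ s, ∑ j ∈ s, q i * p₀ j * G i j = ∑ i ∈ s, q i * b i :=
    fun q => sum_congr rfl fun i hi => by
      rw [← hGp₀ i hi, mul_sum]
      exact sum_congr rfl fun j _ => by ring
  have hright : ∀ q : ι → ℝ, ∑ i ∈ s, ∑ j ∈ s, p₀ i * q j * G i j = ∑ i ∈ s, q i * b i :=
    fun q => by
      rw [sum_comm, ← hleft q]
      exact sum_congr rfl fun j hj => sum_congr rfl fun i hi => by rw [hG i hi j hj]; ring
  -- completing the square around `p₀`
  have hsq : ∀ p : ι → ℝ, Q - 2 * ∑ i ∈ s, p i * b i + ∑ i ∈ s, ∑ j ∈ s, p i * p j * G i j =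
      Q - ∑ i ∈ s, p₀ i * b i + ∑ i ∈ s, ∑ j ∈ s, (p i - p₀ i) * (p j - p₀ j) * G i j := by
    intro p
    simp only [sub_mul, mul_sub, sum_sub_distrib]
    rw [hleft, hright, hleft]
    ring
  have hmin : ∑ i ∈ s, p₀ i * b i = ∑ i ∈ s, ∑ j ∈ s, H i j * b i * b j :=
    sum_congr rfl fun i _ => by
      rw [sum_mul]
      exact sum_congr rfl fun j _ => by ring
  refine IsGLB.ciInf_eq (IsLeast.isGLB ⟨⟨p₀, ?_⟩, Set.forall_mem_range.mpr fun p => ?_⟩)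
  · dsimp only
    rw [hsq p₀, hmin]
    simp
  · rw [hsq p, hmin]
    linarith [hG₀ fun i => p i - p₀ i]

variable {α : Type*} [MeasurableSpace α] {μ : Measure α}

theorem integral_sq_sub_sum_mul (s : Finset ι) {u : α → ℝ} {g : ι → α → ℝ}
    (hu : MemLp u 2 μ) (hg : ∀ i ∈ s, MemLp (g i) 2 μ) (p : ι → ℝ) :
    ∫ x, (u x - ∑ i ∈ s, p i * g i x) ^ 2 ∂μ =
      ∫ x, u x ^ 2 ∂μ - 2 * ∑ i ∈ s, p i * ∫ x, u x * g i x ∂μ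
        + ∑ i ∈ s, ∑ j ∈ s, p i * p j * ∫ x, g i x * g j x ∂μ := by
  have hug : ∀ i ∈ s, Integrable (fun x => p i * (u x * g i x)) μ :=
    fun i hi => (hu.integrable_mul (hg i hi)).const_mul _
  have hgg : ∀ i ∈ s, ∀ j ∈ s, Integrable (fun x => p i * p j * (g i x * g j x)) μ :=
    fun i hi j hj => ((hg i hi).integrable_mul (hg j hj)).const_mul _
  have hexpand : ∀ x, (u x - ∑ i ∈ s, p i * g i x) ^ 2 = u x ^ 2
      - 2 * ∑ i ∈ s, p i * (u x * g i x) + ∑ i ∈ s, ∑ j ∈ s, p i * p j * (g i x * g j x) := by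
    intro x
    have hcross : 2 * u x * ∑ i ∈ s, p i * g i x = 2 * ∑ i ∈ s, p i * (u x * g i x) := by
      rw [mul_sum, mul_sum]
      exact sum_congr rfl fun i _ => by ring
    have hsquare : (∑ i ∈ s, p i * g i x) ^ 2 = ∑ i ∈ s, ∑ j ∈ s, p i * p j * (g i x * g j x) := by
      rw [sq, sum_mul_sum]
      exact sum_congr rfl fun i _ => sum_congr rfl fun j _ => by ring
    rw [sub_sq, hcross, hsquare]
  have hsum : Integrable (fun x => 2 * ∑ i ∈ s, p i * (u x * g i x)) μ :=
    (integrable_finsetSum _ hug).const_mul 2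
  have hdouble : Integrable (fun x => ∑ i ∈ s, ∑ j ∈ s, p i * p j * (g i x * g j x)) μ :=
    integrable_finsetSum _ fun i hi => integrable_finsetSum _ (hgg i hi)
  have hdiff : Integrable (fun x => u x ^ 2 - 2 * ∑ i ∈ s, p i * (u x * g i x)) μ :=
    hu.integrable_sq.sub hsum
  simp_rw [hexpand]
  rw [integral_add hdiff hdouble, integral_sub hu.integrable_sq hsum,
    integral_const_mul, integral_finsetSum _ hug,
    integral_finsetSum _ fun i hi => integrable_finsetSum _ (hgg i hi),
    sum_congr rfl fun i hi => integral_finsetSum _ (hgg i hi)]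
  simp only [integral_const_mul]

theorem iInf_integral_sq_sub_sum_mul [DecidableEq ι] (s : Finset ι) {u : α → ℝ}
    {g : ι → α → ℝ} (hu : MemLp u 2 μ) (hg : ∀ i ∈ s, MemLp (g i) 2 μ) {H : ι → ι → ℝ}
    (hH : ∀ i ∈ s, ∀ m ∈ s,
      ∑ j ∈ s, (∫ x, g i x * g j x ∂μ) * H j m = if i = m then 1 else 0) :
    ⨅ p : ι → ℝ, ∫ x, (u x - ∑ i ∈ s, p i * g i x) ^ 2 ∂μ =
      ∫ x, u x ^ 2 ∂μ -
        ∑ i ∈ s, ∑ j ∈ s, H i j * (∫ x, u x * g i x ∂μ) * ∫ x, u x * g j x ∂μ := by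
  have hgram : ∀ q : ι → ℝ, 0 ≤ ∑ i ∈ s, ∑ j ∈ s, q i * q j * ∫ x, g i x * g j x ∂μ := by
    intro q
    calc 0 ≤ ∫ x, ((0 : α → ℝ) x - ∑ i ∈ s, q i * g i x) ^ 2 ∂μ :=
          integral_nonneg fun _ => sq_nonneg _
      _ = _ := by
          rw [integral_sq_sub_sum_mul s MemLp.zero hg q]
          simp
  simp_rw [integral_sq_sub_sum_mul s hu hg]
  exact iInf_quadratic_eq s _ _ (fun i _ j _ => by simp_rw [mul_comm]) hgram hH

theorem iInf_comp_mul_left {w : ι → ℝ} (hw : ∀ i, w i ≠ 0) (F : (ι → ℝ) → ℝ) :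
    ⨅ p : ι → ℝ, F (fun i => w i * p i) = ⨅ q, F q :=
  Function.Surjective.iInf_comp
    (fun q => ⟨fun i => q i / w i, funext fun i => mul_div_cancel₀ _ (hw i)⟩) F

end LeastSquares

section PowerWeights

open Set Real

variable {ι : Type*}

theorem mul_rpow_half_sq {r : ℝ} (hr : 0 ≤ r) (a e : ℝ) :
    (a * r ^ (e / 2)) ^ 2 = a ^ 2 * r ^ e := by
  rw [mul_pow, ← rpow_mul_natCast hr]
  norm_num

theorem aestronglyMeasurable_deriv_add_mul_div {f : ℝ → ℝ} {R : ℝ}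
    (hf : ∀ r ∈ Ioi R, DifferentiableAt ℝ f r) (c : ℝ) :
    AEStronglyMeasurable (fun r => deriv f r + c * f r / r) (volume.restrict (Ioi R)) := by
  have hfc : ContinuousOn f (Ioi R) := fun r hr => (hf r hr).continuousAt.continuousWithinAt
  exact ((measurable_deriv f).aemeasurable.add ((aemeasurable_const.mul
    (hfc.aemeasurable measurableSet_Ioi)).div aemeasurable_id)).aestronglyMeasurable

theorem memLp_two_mul_rpow_half {g : ℝ → ℝ} {R e : ℝ} (hR : 0 ≤ R)
    (hg : AEStronglyMeasurable g (volume.restrict (Ioi R)))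
    (h : IntegrableOn (fun r => g r ^ 2 * r ^ e) (Ioi R)) :
    MemLp (fun r => g r * r ^ (e / 2)) 2 (volume.restrict (Ioi R)) := by
  refine (memLp_two_iff_integrable_sq
    (hg.mul (measurable_id.pow_const _).aestronglyMeasurable)).2 ?_
  exact h.congr_fun (fun r hr => (mul_rpow_half_sq (hR.trans hr.le) _ _).symm) measurableSet_Ioi

theorem memLp_two_rpow_Ioi {R e : ℝ} (hR : 0 < R) (he : e < -1 / 2) :
    MemLp (fun r : ℝ => r ^ e) 2 (volume.restrict (Ioi R)) := by
  refine (memLp_two_iff_integrable_sq (measurable_id.pow_const e).aestronglyMeasurable).2 ?_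
  refine (integrableOn_Ioi_rpow_of_lt (by linarith : 2 * e < -1) hR).congr_fun
    (fun r hr => ?_) measurableSet_Ioi
  show r ^ (2 * e) = (r ^ e) ^ 2
  rw [← rpow_mul_natCast (hR.trans hr).le, Nat.cast_ofNat, mul_comm]

theorem integral_Ioi_rpow_mul_rpow {R a b : ℝ} (hR : 0 < R) (hab : 0 < a + b) :
    ∫ r in Ioi R, r ^ (-a - 1 / 2) * r ^ (-b - 1 / 2) = R ^ (-(a + b)) / (a + b) := by
  rw [setIntegral_congr_fun measurableSet_Ioi fun r hr => (rpow_add (hR.trans hr) _ _).symm,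
    show -a - 1 / 2 + (-b - 1 / 2) = -(a + b) - 1 by ring,
    integral_Ioi_rpow_of_lt (by linarith) hR, sub_add_cancel, div_neg, neg_div, neg_neg]

theorem deriv_mul_rpow_const {f : ℝ → ℝ} {r : ℝ} (hr : 0 < r) (hf : DifferentiableAt ℝ f r)
    (c : ℝ) : deriv (fun y => f y * y ^ c) r = (deriv f r + c * f r / r) * r ^ c := by
  rw [(hf.hasDerivAt.fun_mul (hasDerivAt_rpow_const (Or.inl hr.ne'))).deriv, rpow_sub_one hr.ne']
  field_simp

theorem sq_deriv_sub_sum_rpow_mul_rpow {f : ℝ → ℝ} {r : ℝ} (hr : 0 < r)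
    (hf : DifferentiableAt ℝ f r) (c e : ℝ) (s : Finset ι) (p γ : ι → ℝ) :
    (deriv (fun y => f y - ∑ i ∈ s, p i * y ^ γ i) r
        + c / r * (f r - ∑ i ∈ s, p i * r ^ γ i)) ^ 2 * r ^ e =
      ((deriv f r + c * f r / r) * r ^ (e / 2)
        - ∑ i ∈ s, (γ i + c) * p i * r ^ (γ i - 1 + e / 2)) ^ 2 := by
  have hderiv : HasDerivAt (fun y => f y - ∑ i ∈ s, p i * y ^ γ i)
      (deriv f r - ∑ i ∈ s, p i * (γ i * r ^ (γ i - 1))) r :=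
    hf.hasDerivAt.sub (HasDerivAt.fun_sum fun i _ =>
      (hasDerivAt_rpow_const (Or.inl hr.ne')).const_mul (p i))
  have hsum : (∑ i ∈ s, (γ i + c) * p i * r ^ (γ i - 1 + e / 2)) =
      (∑ i ∈ s, p i * (γ i * r ^ (γ i - 1)) + c / r * ∑ i ∈ s, p i * r ^ γ i) * r ^ (e / 2) := by
    rw [mul_sum, ← sum_add_distrib, sum_mul]
    refine sum_congr rfl fun i _ => ?_
    rw [rpow_add hr, rpow_sub_one hr.ne']
    field_simp
  rw [hderiv.deriv, ← mul_rpow_half_sq hr.le, hsum]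
  ring

end PowerWeights

section ExteriorPowers

noncomputable def cauchyNode (ν : ℝ) (i : ℕ) : ℝ := ν / 2 + 2 - 2 * i

theorem cauchyNode_add_cauchyNode (ν : ℝ) (i j : ℕ) :
    cauchyNode ν i + cauchyNode ν j = ν - 2 * i - 2 * j + 4 := by
  unfold cauchyNode
  ring

theorem cauchyNode_sub_cauchyNode (ν : ℝ) (i j : ℕ) :
    cauchyNode ν i - cauchyNode ν j = 2 * j - 2 * i := by
  unfold cauchyNode
  ring

theorem cauchyNode_injective (ν : ℝ) : Function.Injective (cauchyNode ν) := fun a b h => by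
  unfold cauchyNode at h
  exact_mod_cast (by linarith : (a : ℝ) = b)

theorem cauchyNode_pos {ν i : ℕ} (hν : Odd ν) (hi : i ∈ Icc 1 ((ν + 4) / 4)) :
    0 < cauchyNode ν i := by
  have hν2 := Nat.odd_iff.mp hν
  have hik := (mem_Icc.mp hi).2
  have : (4 * i : ℝ) ≤ ν + 3 := by exact_mod_cast (by omega : 4 * i ≤ ν + 3)
  unfold cauchyNode
  linarith

theorem two_mul_sub_two_sub_ne_zero {ν : ℕ} (hν : Odd ν) (n : ℕ) : (2 * n - 2 - ν : ℝ) ≠ 0 :=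
  fun h => by
    have hν2 := Nat.odd_iff.mp hν
    have hn : 2 * n = ν + 2 := by exact_mod_cast (by linarith : (2 * n : ℝ) = ν + 2)
    omega

theorem sum_integral_rpow_cauchyNode_mul_eq_ite {ν : ℕ} (hν : Odd ν) {R : ℝ} (hR : 0 < R)
    {d : ℕ → ℝ} (hd : ∀ j : ℕ, d j =
      (∏ ℓ ∈ Icc 1 ((ν + 4) / 4), ((ν : ℝ) - 2 * (ℓ : ℝ) - 2 * (j : ℝ) + 4)) /
        ∏ ℓ ∈ (Icc 1 ((ν + 4) / 4)).erase j, (2 * (ℓ : ℝ) - 2 * (j : ℝ)))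
    {i m : ℕ} (hi : i ∈ Icc 1 ((ν + 4) / 4)) (hm : m ∈ Icc 1 ((ν + 4) / 4)) :
    ∑ j ∈ Icc 1 ((ν + 4) / 4),
      (∫ r in Set.Ioi R, r ^ (-cauchyNode ν i - 1 / 2) * r ^ (-cauchyNode ν j - 1 / 2)) *
        (d j * d m * (R ^ ((ν : ℝ) - 2 * (j : ℝ) - 2 * (m : ℝ) + 4) /
          ((ν : ℝ) - 2 * (j : ℝ) - 2 * (m : ℝ) + 4))) =
      if i = m then 1 else 0 := by
  have hpos : ∀ j ∈ Icc 1 ((ν + 4) / 4), 0 < cauchyNode ν j := fun j hj => cauchyNode_pos hν hj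
  rw [← sum_rpow_div_mul_rpow_div_eq_ite (d := d) (cauchyNode_injective ν).injOn
    (fun a ha b hb => (add_pos (hpos a ha) (hpos b hb)).ne')
    (fun j _ => by rw [hd]; simp only [cauchyNode_add_cauchyNode, cauchyNode_sub_cauchyNode])
    hR hi hm]
  refine sum_congr rfl fun j hj => ?_
  rw [← cauchyNode_add_cauchyNode, integral_Ioi_rpow_mul_rpow hR (add_pos (hpos i hi) (hpos j hj))]

variable {f : ℝ → ℝ} {N c α ν R : ℝ}

theorem setIntegral_sq_deriv_sub_sum_rpow (hc : 2 * c = N - 2 - ν) (hα : 2 * α = -(N - 2) - ν)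
    (hR : 0 ≤ R) (hf : ∀ r ∈ Set.Ioi R, DifferentiableAt ℝ f r) (s : Finset ℕ) (p : ℕ → ℝ) :
    ∫ r in Set.Ioi R,
      (deriv (fun y => f y - ∑ i ∈ s, p i * y ^ (α + 2 * (i : ℝ) - 2)) r
        + (c / r) * (f r - ∑ i ∈ s, p i * r ^ (α + 2 * (i : ℝ) - 2))) ^ 2 * r ^ (N - 1) =
    ∫ r in Set.Ioi R, ((deriv f r + c * f r / r) * r ^ ((N - 1) / 2)
      - ∑ i ∈ s, (2 * (i : ℝ) - 2 - ν) * p i * r ^ (-cauchyNode ν i - 1 / 2)) ^ 2 := by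
  refine setIntegral_congr_fun measurableSet_Ioi fun r hr => ?_
  rw [sq_deriv_sub_sum_rpow_mul_rpow (hR.trans_lt hr) (hf r hr) c _ _ p
    (fun i : ℕ => α + 2 * (i : ℝ) - 2)]
  refine congrArg (fun t => (_ - t) ^ 2) (sum_congr rfl fun i _ => ?_)
  unfold cauchyNode
  congr 2 <;> linarith

theorem eqOn_deriv_add_div_mul_rpow_cauchyNode (hc : 2 * c = N - 2 - ν) (hR : 0 ≤ R)
    (hf : ∀ r ∈ Set.Ioi R, DifferentiableAt ℝ f r) (i : ℕ) :
    Set.EqOn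
      (fun r => (deriv f r + c * f r / r) * r ^ ((N - 1) / 2) * r ^ (-cauchyNode ν i - 1 / 2))
      (fun r => deriv (fun y => f y * y ^ c) r * r ^ (2 * (i : ℝ) - 2)) (Set.Ioi R) := by
  intro r hr
  have hr₀ : 0 < r := hR.trans_lt hr
  dsimp only
  rw [deriv_mul_rpow_const hr₀ (hf r hr), mul_assoc, mul_assoc, ← Real.rpow_add hr₀,
    ← Real.rpow_add hr₀]
  unfold cauchyNode
  congr 2
  linarith

end ExteriorPowers

theorem projection_formula_H1_component_general
    (N : ℕ) (β c α : ℝ)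
    (hc : c = ((N : ℝ) - 2) * (1 - β) / 2)
    (hα : α = -(((N : ℝ) - 2) * (1 + β)) / 2)
    (ν : ℕ) (hνodd : Odd ν) (hνβ : ((N : ℝ) - 2) * β = (ν : ℝ))
    (R : ℝ) (hR : 0 < R)
    (k₂ : ℕ) (hk₂ : k₂ = (ν + 4) / 4)
    (dtil : ℕ → ℝ)
    (hdtil : ∀ j : ℕ, dtil j =
      (∏ ℓ ∈ Finset.Icc 1 k₂, ((ν : ℝ) - 2 * (ℓ : ℝ) - 2 * (j : ℝ) + 4)) /
        (∏ ℓ ∈ (Finset.Icc 1 k₂).erase j, (2 * (ℓ : ℝ) - 2 * (j : ℝ))))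
    (f : ℝ → ℝ)
    (hdiff : ∀ r ∈ Set.Ioi R, DifferentiableAt ℝ f r)
    (hfH1 : IntegrableOn
      (fun r => (deriv f r + c * f r / r) ^ 2 * r ^ ((N : ℝ) - 1)) (Set.Ioi R)) :
    (∀ i ∈ Finset.Icc 1 k₂,
      IntegrableOn
        (fun r => deriv (fun s => f s * s ^ c) r * r ^ (2 * (i : ℝ) - 2))
        (Set.Ioi R)) ∧
    (⨅ p : ℕ → ℝ, ∫ r in Set.Ioi R,
        (deriv (fun s => f s - ∑ i ∈ Finset.Icc 1 k₂, p i * s ^ (α + 2 * (i : ℝ) - 2)) r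
          + (c / r) *
            (f r - ∑ i ∈ Finset.Icc 1 k₂, p i * r ^ (α + 2 * (i : ℝ) - 2))) ^ 2 *
          r ^ ((N : ℝ) - 1))
      = (∫ r in Set.Ioi R, (deriv f r + c * f r / r) ^ 2 * r ^ ((N : ℝ) - 1))
        - ∑ i ∈ Finset.Icc 1 k₂, ∑ j ∈ Finset.Icc 1 k₂,
            dtil i * dtil j *
              (R ^ ((ν : ℝ) - 2 * (i : ℝ) - 2 * (j : ℝ) + 4) /
                ((ν : ℝ) - 2 * (i : ℝ) - 2 * (j : ℝ) + 4)) *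
              (∫ r in Set.Ioi R, deriv (fun s => f s * s ^ c) r * r ^ (2 * (i : ℝ) - 2)) *
              (∫ r in Set.Ioi R, deriv (fun s => f s * s ^ c) r * r ^ (2 * (j : ℝ) - 2)) := by
  subst hk₂
  have h2c : 2 * c = N - 2 - ν := by rw [hc]; linear_combination -hνβ
  have h2α : 2 * α = -(N - 2) - ν := by rw [hα]; linear_combination -hνβ
  have hu := memLp_two_mul_rpow_half hR.le (aestronglyMeasurable_deriv_add_mul_div hdiff c) hfH1
  have hφ : ∀ i ∈ Icc 1 ((ν + 4) / 4), MemLp (fun r : ℝ => r ^ (-cauchyNode ν i - 1 / 2)) 2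
      (volume.restrict (Set.Ioi R)) :=
    fun i hi => memLp_two_rpow_Ioi hR (by linarith [cauchyNode_pos hνodd hi])
  have hinner := fun i => setIntegral_congr_fun (μ := volume) measurableSet_Ioi
    (eqOn_deriv_add_div_mul_rpow_cauchyNode h2c hR.le hdiff i)
  have hnorm := setIntegral_congr_fun (μ := volume) measurableSet_Ioi fun r (hr : r ∈ Set.Ioi R) =>
    mul_rpow_half_sq (hR.trans hr).le (deriv f r + c * f r / r) ((N : ℝ) - 1)
  refine ⟨fun i hi => IntegrableOn.congr_fun (hu.integrable_mul (hφ i hi))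
    (eqOn_deriv_add_div_mul_rpow_cauchyNode h2c hR.le hdiff i) measurableSet_Ioi, ?_⟩
  rw [iInf_congr fun p => setIntegral_sq_deriv_sub_sum_rpow h2c h2α hR.le hdiff _ p,
    iInf_comp_mul_left (two_mul_sub_two_sub_ne_zero hνodd) fun q => ∫ r in Set.Ioi R,
      ((deriv f r + c * f r / r) * r ^ (((N : ℝ) - 1) / 2)
        - ∑ i ∈ Icc 1 ((ν + 4) / 4), q i * r ^ (-cauchyNode ν i - 1 / 2)) ^ 2,
    iInf_integral_sq_sub_sum_mul _ hu hφ fun i hi m hm =>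
      sum_integral_rpow_cauchyNode_mul_eq_ite hνodd hR hdtil hi hm]
  simp only [hnorm, hinner]

/-- Explicit formula for the squared `Ḣ¹_a(r ≥ R)` distance of `f` to the span
of the powers `r^{α+2i-2}`, `1 ≤ i ≤ k₂`, via the inverse Cauchy matrix
coefficients `d̃_j`. -/
theorem projection_formula_H1_component
    (N : ℕ) (hN : 3 ≤ N) (a : ℝ) (ha : 0 < a)
    (β c α : ℝ)
    (hβ : β = Real.sqrt (1 + 4 * a / ((N : ℝ) - 2) ^ 2))
    (hc : c = ((N : ℝ) - 2) * (1 - β) / 2)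
    (hα : α = -(((N : ℝ) - 2) * (1 + β)) / 2)
    (ν : ℕ) (hνodd : Odd ν) (hνpos : 0 < ν) (hνβ : ((N : ℝ) - 2) * β = (ν : ℝ))
    (R : ℝ) (hR : 0 < R)
    (k₂ : ℕ) (hk₂ : k₂ = (ν + 4) / 4)
    (dtil : ℕ → ℝ)
    (hdtil : ∀ j : ℕ, dtil j =
      (∏ ℓ ∈ Finset.Icc 1 k₂, ((ν : ℝ) - 2 * (ℓ : ℝ) - 2 * (j : ℝ) + 4)) /
        (∏ ℓ ∈ (Finset.Icc 1 k₂).erase j, (2 * (ℓ : ℝ) - 2 * (j : ℝ))))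
    (f : ℝ → ℝ)
    (hdiff : ∀ r ∈ Set.Ioi R, DifferentiableAt ℝ f r)
    (hfH1 : IntegrableOn
      (fun r => (deriv f r + c * f r / r) ^ 2 * r ^ ((N : ℝ) - 1)) (Set.Ioi R)) :
    (∀ i ∈ Finset.Icc 1 k₂,
      IntegrableOn
        (fun r => deriv (fun s => f s * s ^ c) r * r ^ (2 * (i : ℝ) - 2))
        (Set.Ioi R)) ∧
    (⨅ p : ℕ → ℝ, ∫ r in Set.Ioi R,
        (deriv (fun s => f s - ∑ i ∈ Finset.Icc 1 k₂, p i * s ^ (α + 2 * (i : ℝ) - 2)) r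
          + (c / r) *
            (f r - ∑ i ∈ Finset.Icc 1 k₂, p i * r ^ (α + 2 * (i : ℝ) - 2))) ^ 2 *
          r ^ ((N : ℝ) - 1))
      = (∫ r in Set.Ioi R, (deriv f r + c * f r / r) ^ 2 * r ^ ((N : ℝ) - 1))
        - ∑ i ∈ Finset.Icc 1 k₂, ∑ j ∈ Finset.Icc 1 k₂,
            dtil i * dtil j *
              (R ^ ((ν : ℝ) - 2 * (i : ℝ) - 2 * (j : ℝ) + 4) /
                ((ν : ℝ) - 2 * (i : ℝ) - 2 * (j : ℝ) + 4)) *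
              (∫ r in Set.Ioi R, deriv (fun s => f s * s ^ c) r * r ^ (2 * (i : ℝ) - 2)) *
              (∫ r in Set.Ioi R, deriv (fun s => f s * s ^ c) r * r ^ (2 * (j : ℝ) - 2)) :=
  projection_formula_H1_component_general N β c α hc hα ν hνodd hνβ R hR k₂ hk₂ dtil hdtil f hdiff
    hfH1
end
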